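/- Let ε* = ln( (−5 + 2·(6353 − 405√241)^{1/3} + 2·(6353 + 405√241)^{1/3}) / 27 ), and define α*(ε) = 1 − e^{−ε/2} if ε > ε* and α*(ε) = 0 if 0 < ε ≤ ε*. Then for every ε > 0, max_{t ∈ [−1,1]} σ²_H(t, ε, α*(ε)) equals (e^{ε/2}+3)/(3e^{ε/2}(e^{ε/2}−1)) + (e^ε+1)²/(e^{ε/2}(e^ε−1)²) if ε > ε*, and equals ((e^ε+1)/(e^ε−1))² if 0 < ε ≤ ε*. -/
import Mathlib


open Real

/-- noise variance of the Piecewise Mechanism on input `t` with privacy budget `ε`. -/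
noncomputable def pmVar (t ε : ℝ) : ℝ :=
  t ^ 2 / (exp (ε / 2) - 1) + (exp (ε / 2) + 3) / (3 * (exp (ε / 2) - 1) ^ 2)

/-- noise variance of Duchi et al.'s one-dimensional mechanism on input `t`. -/
noncomputable def duchiVar (t ε : ℝ) : ℝ := ((exp ε + 1) / (exp ε - 1)) ^ 2 - t ^ 2

/-- noise variance of the Hybrid Mechanism (PM with probability `α`, Duchi with `1−α`). -/
noncomputable def hmVar (t ε α : ℝ) : ℝ := α * pmVar t ε + (1 - α) * duchiVar t ε

/-- `ε* = ln((−5 + 2·(6353 − 405√241)^{1/3} + 2·(6353 + 405√241)^{1/3}) / 27)`. -/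
noncomputable def epsStar : ℝ :=
  Real.log ((-5 + 2 * (6353 - 405 * Real.sqrt 241) ^ ((1 : ℝ) / 3) +
      2 * (6353 + 405 * Real.sqrt 241) ^ ((1 : ℝ) / 3)) / 27)

/-- the optimal mixing probability `α*(ε)`. -/
noncomputable def alphaStar (ε : ℝ) : ℝ := if ε > epsStar then 1 - exp (-(ε / 2)) else 0

lemma hmVar_const (ε t : ℝ) (hε : 0 < ε) :
    hmVar t ε (1 - exp (-(ε / 2))) =
      (exp (ε / 2) + 3) / (3 * exp (ε / 2) * (exp (ε / 2) - 1)) +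
        (exp ε + 1) ^ 2 / (exp (ε / 2) * (exp ε - 1) ^ 2) := by
  have hE1 : 1 < exp (ε / 2) := by
    nlinarith [Real.add_one_le_exp (ε / 2), Real.exp_pos (ε / 2)]
  have hEpos : 0 < exp (ε / 2) := Real.exp_pos _
  have hεe : exp ε = exp (ε / 2) * exp (ε / 2) := by
    rw [← Real.exp_add]; ring_nf
  have h1 : exp (ε / 2) - 1 ≠ 0 := by linarith
  have h2 : exp (ε / 2) ≠ 0 := by positivity
  have h3 : exp ε - 1 ≠ 0 := by nlinarith
  unfold hmVar pmVar duchiVar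
  rw [Real.exp_neg, hεe]
  generalize exp (ε / 2) = E at *
  have h3' : E * E - 1 ≠ 0 := by nlinarith
  field_simp
  ring

/-- Closed form of the worst-case noise variance of the Hybrid Mechanism at `α = α*(ε)`. -/
theorem stmt_12 (ε : ℝ) (hε : 0 < ε) :
    IsGreatest ((fun t => hmVar t ε (alphaStar ε)) '' Set.Icc (-1 : ℝ) 1)
      (if ε > epsStar then
        (exp (ε / 2) + 3) / (3 * exp (ε / 2) * (exp (ε / 2) - 1)) +
          (exp ε + 1) ^ 2 / (exp (ε / 2) * (exp ε - 1) ^ 2)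
      else ((exp ε + 1) / (exp ε - 1)) ^ 2) := by
  unfold alphaStar
  by_cases h : ε > epsStar
  · simp only [if_pos h]
    constructor
    · exact ⟨0, by norm_num, hmVar_const ε 0 hε⟩
    · rintro x ⟨t, ht, rfl⟩
      exact le_of_eq (hmVar_const ε t hε)
  · simp only [if_neg h]
    constructor
    · refine ⟨0, by norm_num, ?_⟩
      simp [hmVar, pmVar, duchiVar]
    · rintro x ⟨t, ht, rfl⟩
      simp only [hmVar, pmVar, duchiVar]
      nlinarith [sq_nonneg t]
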